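/- arXiv:2103.15604 — 5 statements merged into one kernel-verified Lean document; each statement's English description precedes it below -/
import Mathlib

section
/- Let t0 ∈ ℝ, let h : ℝ → ℝ be differentiable on [t0, ∞), and let α > 0, β > 0, 0 < γ1 < 1, γ2 > 1 be constants. Suppose that for all t ≥ t0, h'(t) ≥ -α·sgn(h(t))·|h(t)|^γ1 - β·sgn(h(t))·|h(t)|^γ2. Then for every initial value h(t0) ∈ ℝ (no matter how negative), h(t) ≥ 0 for all t ≥ t0 + T, where T := 1/(α(1-γ1)) + 1/(β(γ2-1)). In particular the time T after which h is nonnegative is independent of the initial condition. -/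
open Set Filter

/-- Fixed-time convergence part of Lemma 1: under the barrier differential
inequality, for every initial value `h t0`, the function `h` is nonnegative
after the fixed time `T = 1/(α(1-γ1)) + 1/(β(γ2-1))`, independently of the
initial condition. -/
theorem stmt_1 (t0 : ℝ) (h h' : ℝ → ℝ)
    (hdiff : ∀ t, t0 ≤ t → HasDerivAt h (h' t) t)
    (α β γ1 γ2 : ℝ) (hα : 0 < α) (hβ : 0 < β)
    (hγ1 : 0 < γ1) (hγ1' : γ1 < 1) (hγ2 : 1 < γ2)
    (hineq : ∀ t, t0 ≤ t →
      h' t ≥ -α * Real.sign (h t) * |h t| ^ γ1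
              - β * Real.sign (h t) * |h t| ^ γ2) :
    ∀ t, t0 + (1 / (α * (1 - γ1)) + 1 / (β * (γ2 - 1))) ≤ t → 0 ≤ h t := by
  set T1 : ℝ := 1 / (α * (1 - γ1)) with hT1def
  set T2 : ℝ := 1 / (β * (γ2 - 1)) with hT2def
  have hT1pos : 0 < T1 := by
    rw [hT1def]; apply one_div_pos.mpr; nlinarith
  have hT2pos : 0 < T2 := by
    rw [hT2def]; apply one_div_pos.mpr; nlinarith
  -- pointwise key inequality when h is negative
  have key : ∀ u, t0 ≤ u → h u < 0 →
      α * (-h u) ^ γ1 + β * (-h u) ^ γ2 ≤ h' u := by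
    intro u hu hneg
    have H := hineq u hu
    rw [Real.sign_of_neg hneg, abs_of_neg hneg] at H
    nlinarith [H]
  -- invariance: once nonnegative, stays nonnegative
  have inv : ∀ s u, t0 ≤ s → s ≤ u → 0 ≤ h s → 0 ≤ h u := by
    intro s u hs hsu hhs
    by_contra hneg
    push_neg at hneg
    set S : Set ℝ := {x | x ∈ Icc s u ∧ 0 ≤ h x} with hSdef
    have hSne : S.Nonempty := ⟨s, ⟨le_refl s, hsu⟩, hhs⟩
    have hSbdd : BddAbove S := ⟨u, fun x hx => hx.1.2⟩
    obtain ⟨τ, hτdef⟩ : ∃ τ : ℝ, τ = sSup S := ⟨_, rfl⟩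
    have hsτ : s ≤ τ := hτdef ▸ le_csSup hSbdd ⟨⟨le_refl s, hsu⟩, hhs⟩
    have hτu : τ ≤ u := hτdef ▸ csSup_le hSne fun x hx => hx.1.2
    have ht0τ : t0 ≤ τ := le_trans hs hsτ
    have hτclos : τ ∈ closure S := hτdef ▸ csSup_mem_closure hSne hSbdd
    haveI hNB : (nhdsWithin τ S).NeBot := mem_closure_iff_nhdsWithin_neBot.mp hτclos
    have hhτ : 0 ≤ h τ := by
      have htd : Tendsto h (nhdsWithin τ S) (nhds (h τ)) :=
        ((hdiff τ ht0τ).continuousAt.continuousWithinAt)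
      exact ge_of_tendsto htd (eventually_nhdsWithin_of_forall fun x hx => hx.2)
    have hτltu : τ < u := lt_of_le_of_ne hτu (by rintro rfl; exact absurd hhτ (not_le.mpr hneg))
    have hIocneg : ∀ x ∈ Ioc τ u, h x < 0 := by
      intro x hx
      by_contra hc
      push_neg at hc
      have hxS : x ∈ S := ⟨⟨le_trans hsτ hx.1.le, hx.2⟩, hc⟩
      exact absurd (hτdef ▸ le_csSup hSbdd hxS) (not_le.mpr hx.1)
    have hmono : StrictMonoOn h (Icc τ u) := by
      apply strictMonoOn_of_deriv_pos (convex_Icc τ u)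
      · exact fun x hx => (hdiff x (le_trans ht0τ hx.1)).continuousAt.continuousWithinAt
      · intro x hx
        rw [interior_Icc] at hx
        have hxt0 : t0 ≤ x := le_trans ht0τ hx.1.le
        have hxneg : h x < 0 := hIocneg x ⟨hx.1, hx.2.le⟩
        rw [(hdiff x hxt0).deriv]
        have hgpos : 0 < -h x := by linarith
        have k := key x hxt0 hxneg
        nlinarith [Real.rpow_pos_of_pos hgpos γ1, Real.rpow_pos_of_pos hgpos γ2]
    have := hmono (left_mem_Icc.mpr hτu) (right_mem_Icc.mpr hτu) hτltu
    linarith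
  -- main: reach nonnegativity within T1 + T2
  have reach : ∃ s ∈ Icc t0 (t0 + (T1 + T2)), 0 ≤ h s := by
    by_contra hc
    push_neg at hc
    have hcneg : ∀ x ∈ Icc t0 (t0 + (T1 + T2)), h x < 0 := fun x hx => hc x hx
    -- Stage 1 : within time T2, -h drops to ≤ 1
    have stage1 : ∃ t1 ∈ Icc t0 (t0 + T2), -h t1 ≤ 1 := by
      by_contra hc1
      push_neg at hc1
      set f : ℝ → ℝ := fun x => (-h x) ^ (1 - γ2) with hfdef
      have hsub : Icc t0 (t0 + T2) ⊆ Icc t0 (t0 + (T1 + T2)) :=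
        Icc_subset_Icc le_rfl (by linarith)
      have hd : ∀ x ∈ Icc t0 (t0 + T2),
          HasDerivAt f ((-h' x) * (1 - γ2) * (-h x) ^ (1 - γ2 - 1)) x := by
        intro x hx
        have hne : -h x ≠ 0 := by have := hc1 x hx; intro hz; linarith
        exact ((hdiff x hx.1).neg).rpow_const (Or.inl hne)
      have hcont : ContinuousOn f (Icc t0 (t0 + T2)) :=
        fun x hx => (hd x hx).continuousAt.continuousWithinAt
      have hdiffOn : DifferentiableOn ℝ f (interior (Icc t0 (t0 + T2))) :=
        fun x hx => ((hd x (interior_subset hx)).differentiableAt).differentiableWithinAt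
      have hderiv_ge : ∀ x ∈ interior (Icc t0 (t0 + T2)), β * (γ2 - 1) ≤ deriv f x := by
        intro x hx
        rw [interior_Icc] at hx
        have hxI : x ∈ Icc t0 (t0 + T2) := ⟨hx.1.le, hx.2.le⟩
        have hg1 : 1 < -h x := hc1 x hxI
        have hgpos : 0 < -h x := by linarith
        have hxneg : h x < 0 := by linarith
        have hk := key x hxI.1 hxneg
        have hdx : deriv f x = (-h' x) * (1 - γ2) * (-h x) ^ (1 - γ2 - 1) := (hd x hxI).deriv
        rw [hdx, show (1 : ℝ) - γ2 - 1 = -γ2 by ring]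
        have e1 : (-h x) ^ γ2 * (-h x) ^ (-γ2) = 1 := by
          rw [← Real.rpow_add hgpos, add_neg_cancel, Real.rpow_zero]
        have p1 : 0 < (-h x) ^ (-γ2) := Real.rpow_pos_of_pos hgpos _
        have p2 : 0 ≤ α * (-h x) ^ γ1 := by positivity
        have k1 : β * (-h x) ^ γ2 * (γ2 - 1) ≤ h' x * (γ2 - 1) := by nlinarith
        have k2 : β * (-h x) ^ γ2 * (γ2 - 1) * (-h x) ^ (-γ2)
            ≤ h' x * (γ2 - 1) * (-h x) ^ (-γ2) := mul_le_mul_of_nonneg_right k1 p1.le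
        have k3 : β * (-h x) ^ γ2 * (γ2 - 1) * (-h x) ^ (-γ2) = β * (γ2 - 1) := by
          rw [show β * (-h x) ^ γ2 * (γ2 - 1) * (-h x) ^ (-γ2)
              = β * (γ2 - 1) * ((-h x) ^ γ2 * (-h x) ^ (-γ2)) from by ring, e1, mul_one]
        nlinarith [k2, k3]
      have hmain := (convex_Icc t0 (t0 + T2)).mul_sub_le_image_sub_of_le_deriv hcont hdiffOn
        hderiv_ge t0 (left_mem_Icc.mpr (by linarith)) (t0 + T2)
        (right_mem_Icc.mpr (by linarith)) (by linarith)
      have hTval : β * (γ2 - 1) * (t0 + T2 - t0) = 1 := by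
        have hne : (0:ℝ) < β * (γ2 - 1) := by nlinarith
        rw [hT2def, show t0 + 1 / (β * (γ2 - 1)) - t0 = 1 / (β * (γ2 - 1)) from by ring,
          mul_one_div, div_self hne.ne']
      have hflt : f (t0 + T2) < 1 :=
        Real.rpow_lt_one_of_one_lt_of_neg (hc1 _ (right_mem_Icc.mpr (by linarith)))
          (by linarith)
      have hfpos : 0 < f t0 := by
        have : 1 < -h t0 := hc1 t0 (left_mem_Icc.mpr (by linarith))
        exact Real.rpow_pos_of_pos (by linarith) _
      rw [hTval] at hmain
      linarith
    obtain ⟨t1, ht1mem, ht1le⟩ := stage1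
    -- -h is antitone on the full interval
    have hanti : AntitoneOn (fun x => -h x) (Icc t0 (t0 + (T1 + T2))) := by
      apply antitoneOn_of_deriv_nonpos (convex_Icc _ _)
      · exact fun x hx => ((hdiff x hx.1).neg).continuousAt.continuousWithinAt
      · exact fun x hx =>
          (((hdiff x (interior_subset hx).1).neg).differentiableAt).differentiableWithinAt
      · intro x hx
        rw [interior_Icc] at hx
        have hxI : x ∈ Icc t0 (t0 + (T1 + T2)) := ⟨hx.1.le, hx.2.le⟩
        have hxneg : h x < 0 := hcneg x hxI
        have hgpos : 0 < -h x := by linarith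
        rw [show deriv (fun x => -h x) x = -h' x from ((hdiff x hxI.1).neg).deriv]
        have hk := key x hxI.1 hxneg
        nlinarith [Real.rpow_pos_of_pos hgpos γ1, Real.rpow_pos_of_pos hgpos γ2]
    set m : ℝ := t0 + T2 with hmdef
    have hmI : m ∈ Icc t0 (t0 + (T1 + T2)) := ⟨by linarith, by linarith⟩
    have ht1I : t1 ∈ Icc t0 (t0 + (T1 + T2)) :=
      ⟨ht1mem.1, by have := ht1mem.2; linarith⟩
    have hgm1 : -h m ≤ 1 := le_trans (hanti ht1I hmI ht1mem.2) ht1le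
    have hgle1 : ∀ x ∈ Icc m (t0 + (T1 + T2)), -h x ≤ 1 := by
      intro x hx
      have hxI : x ∈ Icc t0 (t0 + (T1 + T2)) := ⟨by have := hx.1; linarith, hx.2⟩
      exact le_trans (hanti hmI hxI hx.1) hgm1
    -- Stage 2 : finite-time convergence to zero
    set v : ℝ → ℝ := fun x => (-h x) ^ (1 - γ1) with hvdef
    have hJsub : Icc m (t0 + (T1 + T2)) ⊆ Icc t0 (t0 + (T1 + T2)) :=
      Icc_subset_Icc (by linarith) le_rfl
    have hdv : ∀ x ∈ Icc m (t0 + (T1 + T2)),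
        HasDerivAt v ((-h' x) * (1 - γ1) * (-h x) ^ (1 - γ1 - 1)) x := by
      intro x hx
      have hxI := hJsub hx
      have hne : -h x ≠ 0 := by have := hcneg x hxI; intro hz; linarith
      exact ((hdiff x hxI.1).neg).rpow_const (Or.inl hne)
    have hcontv : ContinuousOn v (Icc m (t0 + (T1 + T2))) :=
      fun x hx => (hdv x hx).continuousAt.continuousWithinAt
    have hdiffOnv : DifferentiableOn ℝ v (interior (Icc m (t0 + (T1 + T2)))) :=
      fun x hx => ((hdv x (interior_subset hx)).differentiableAt).differentiableWithinAt
    have hderiv_le : ∀ x ∈ interior (Icc m (t0 + (T1 + T2))),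
        deriv v x ≤ -(α * (1 - γ1)) := by
      intro x hx
      rw [interior_Icc] at hx
      have hxJ : x ∈ Icc m (t0 + (T1 + T2)) := ⟨hx.1.le, hx.2.le⟩
      have hxI := hJsub hxJ
      have hxneg : h x < 0 := hcneg x hxI
      have hgpos : 0 < -h x := by linarith
      have hk := key x hxI.1 hxneg
      have hdx : deriv v x = (-h' x) * (1 - γ1) * (-h x) ^ (1 - γ1 - 1) := (hdv x hxJ).deriv
      rw [hdx, show (1 : ℝ) - γ1 - 1 = -γ1 by ring]
      have e1 : (-h x) ^ γ1 * (-h x) ^ (-γ1) = 1 := by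
        rw [← Real.rpow_add hgpos, add_neg_cancel, Real.rpow_zero]
      have p1 : 0 < (-h x) ^ (-γ1) := Real.rpow_pos_of_pos hgpos _
      have p2 : 0 ≤ β * (-h x) ^ γ2 := by positivity
      have k1 : (-h' x) * (1 - γ1) ≤ -(α * (-h x) ^ γ1) * (1 - γ1) := by nlinarith
      have k2 : (-h' x) * (1 - γ1) * (-h x) ^ (-γ1)
          ≤ -(α * (-h x) ^ γ1) * (1 - γ1) * (-h x) ^ (-γ1) :=
        mul_le_mul_of_nonneg_right k1 p1.le
      have k3 : -(α * (-h x) ^ γ1) * (1 - γ1) * (-h x) ^ (-γ1) = -(α * (1 - γ1)) := by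
        rw [show -(α * (-h x) ^ γ1) * (1 - γ1) * (-h x) ^ (-γ1)
            = -(α * (1 - γ1)) * ((-h x) ^ γ1 * (-h x) ^ (-γ1)) from by ring, e1, mul_one]
      linarith [k2, k3]
    have hmain := (convex_Icc m (t0 + (T1 + T2))).image_sub_le_mul_sub_of_deriv_le hcontv
      hdiffOnv hderiv_le m (left_mem_Icc.mpr (by linarith)) (t0 + (T1 + T2))
      (right_mem_Icc.mpr (by linarith)) (by linarith)
    have hTval : -(α * (1 - γ1)) * (t0 + (T1 + T2) - m) = -1 := by
      have hne : (0:ℝ) < α * (1 - γ1) := by nlinarith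
      rw [show t0 + (T1 + T2) - m = T1 from by rw [hmdef]; ring, hT1def,
        neg_mul, mul_one_div, div_self hne.ne']
    rw [hTval] at hmain
    have hvm : v m ≤ 1 := by
      apply Real.rpow_le_one _ (hgle1 m (left_mem_Icc.mpr (by linarith))) (by linarith)
      have : h m < 0 := hcneg m hmI
      linarith
    have hvend : 0 < v (t0 + (T1 + T2)) := by
      have : h (t0 + (T1 + T2)) < 0 :=
        hcneg _ (right_mem_Icc.mpr (by linarith))
      exact Real.rpow_pos_of_pos (by linarith) _
    linarith
  obtain ⟨s, hsmem, hhs⟩ := reach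
  intro t ht
  exact inv s t hsmem.1 (le_trans hsmem.2 ht) hhs
end

section
/- Let t0 =: τ0 < τ1 < ⋯ < τp be real numbers and let α > 0, β > 0, 0 < γ1 < 1, γ2 > 1 be constants with T := 1/(α(1-γ1)) + 1/(β(γ2-1)) ≤ min_{0 ≤ l ≤ p-1} (τ_{l+1} - τ_l). Let h : [t0, ∞) → ℝ be differentiable on each interval [τ_l, τ_{l+1}) (and on [τ_p, ∞)), and suppose the jumps at the switching instants are nondecreasing: for each l ∈ {1, …, p}, lim_{t → τ_l⁻} h(t) ≤ h(τ_l). Suppose that on each interval [τ_l, τ_{l+1}) (and on [τ_p, ∞)) it holds that h'(t) ≥ -α·sgn(h(t))·|h(t)|^γ1 - β·sgn(h(t))·|h(t)|^γ2. Then: (i) if h(t0) ≥ 0, then h(t) ≥ 0 for all t ≥ t0; and (ii) for every initial value h(t0) ∈ ℝ, h(t) ≥ 0 for all t ≥ t0 + T. -/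
open Set

lemma lin_lower (a b c : ℝ) (g g' : ℝ → ℝ) (hab : a ≤ b)
    (hc : ContinuousOn g (Icc a b))
    (hd : ∀ t ∈ Ioo a b, HasDerivAt g (g' t) t)
    (hge : ∀ t ∈ Ioo a b, c ≤ g' t) :
    g a + c * (b - a) ≤ g b := by
  have H : MonotoneOn (fun t => g t - c * t) (Icc a b) := by
    apply monotoneOn_of_deriv_nonneg (convex_Icc a b)
    · exact hc.sub ((continuous_const.mul continuous_id).continuousOn)
    · intro x hx
      rw [interior_Icc] at hx
      exact ((hd x hx).sub ((hasDerivAt_id' x).const_mul c)).differentiableAt.differentiableWithinAt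
    · intro x hx
      rw [interior_Icc] at hx
      change 0 ≤ deriv (g - fun y => c * y) x
      rw [((hd x hx).sub ((hasDerivAt_id' x).const_mul c)).deriv]
      nlinarith [hge x hx]
  have := H (left_mem_Icc.2 hab) (right_mem_Icc.2 hab) hab
  simp only at this
  nlinarith

lemma nonneg_core (a b : ℝ) (h h' : ℝ → ℝ) (hab : a ≤ b)
    (hc : ContinuousOn h (Icc a b))
    (hd : ∀ t ∈ Ioo a b, HasDerivAt h (h' t) t)
    (hpos : ∀ t ∈ Ioo a b, h t < 0 → 0 < h' t)
    (ha : 0 ≤ h a) : 0 ≤ h b := by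
  by_contra hb
  push_neg at hb
  have hab' : a < b := lt_of_le_of_ne hab (by rintro rfl; exact absurd ha (not_le.2 hb))
  set S := {t ∈ Icc a b | 0 ≤ h t} with hS
  have hne : S.Nonempty := ⟨a, ⟨left_mem_Icc.2 hab, ha⟩⟩
  have hbdd : BddAbove S := ⟨b, fun t ht => ht.1.2⟩
  have hclosed : IsClosed S := by
    have hSeq : S = Icc a b ∩ h ⁻¹' (Ici 0) := by
      ext t; simp [hS]
    rw [hSeq]
    exact hc.preimage_isClosed_of_isClosed isClosed_Icc isClosed_Ici
  set s := sSup S with hs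
  have hsS : s ∈ S := hclosed.csSup_mem hne hbdd
  have hsb : s < b := lt_of_le_of_ne hsS.1.2
    (fun he => absurd hsS.2 (by rw [he]; exact not_le.2 hb))
  have hneg : ∀ t ∈ Ioc s b, h t < 0 := by
    intro t ht
    by_contra hc'
    push_neg at hc'
    have : t ∈ S := ⟨⟨le_trans hsS.1.1 ht.1.le, ht.2⟩, hc'⟩
    exact absurd (le_csSup hbdd this) (not_le.2 ht.1)
  have hmono : StrictMonoOn h (Icc s b) := by
    apply strictMonoOn_of_deriv_pos (convex_Icc s b) (hc.mono (Icc_subset_Icc hsS.1.1 le_rfl))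
    intro x hx
    rw [interior_Icc] at hx
    have hx' : x ∈ Ioo a b := ⟨lt_of_le_of_lt hsS.1.1 hx.1, hx.2⟩
    rw [(hd x hx').deriv]
    exact hpos x hx' (hneg x ⟨hx.1, hx.2.le⟩)
  have := hmono (left_mem_Icc.2 hsb.le) (right_mem_Icc.2 hsb.le) hsb
  linarith [hsS.2]

/-- Lemma 1 of the paper in its switched form: the piecewise differentiable
barrier function `h`, with switching instants `τ 0 = t0 < τ 1 < ⋯ < τ p`,
nondecreasing jumps at switches, the barrier differential inequality on each
interval, and the dwell-time condition
`T = 1/(α(1-γ1)) + 1/(β(γ2-1)) ≤ min_l (τ (l+1) - τ l)`, satisfies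
(i) forward invariance of `{h ≥ 0}` and (ii) fixed-time convergence. -/
theorem stmt_2 (p : ℕ) (hp : 1 ≤ p) (τ : ℕ → ℝ) (t0 : ℝ)
    (hτ0 : τ 0 = t0) (hτmono : ∀ l < p, τ l < τ (l + 1))
    (α β γ1 γ2 : ℝ) (hα : 0 < α) (hβ : 0 < β)
    (hγ1 : 0 < γ1) (hγ1' : γ1 < 1) (hγ2 : 1 < γ2)
    (hdwell : ∀ l < p,
      1 / (α * (1 - γ1)) + 1 / (β * (γ2 - 1)) ≤ τ (l + 1) - τ l)
    (h h' : ℝ → ℝ)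
    (hdiff : ∀ l < p, ∀ t ∈ Set.Ico (τ l) (τ (l + 1)),
      HasDerivWithinAt h (h' t) (Set.Ico (τ l) (τ (l + 1))) t)
    (hdifflast : ∀ t ∈ Set.Ici (τ p),
      HasDerivWithinAt h (h' t) (Set.Ici (τ p)) t)
    (hjump : ∀ l, 1 ≤ l → l ≤ p → ∃ L : ℝ,
      Filter.Tendsto h (nhdsWithin (τ l) (Set.Iio (τ l))) (nhds L) ∧
        L ≤ h (τ l))
    (hineq : ∀ t, t0 ≤ t →
      h' t ≥ -α * Real.sign (h t) * |h t| ^ γ1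
              - β * Real.sign (h t) * |h t| ^ γ2) :
    (0 ≤ h t0 → ∀ t, t0 ≤ t → 0 ≤ h t) ∧
      (∀ t, t0 + (1 / (α * (1 - γ1)) + 1 / (β * (γ2 - 1))) ≤ t → 0 ≤ h t) := by
  have hp0 : 0 < p := hp
  have h1γ1 : 0 < 1 - γ1 := by linarith
  have hγ21 : 0 < γ2 - 1 := by linarith
  set Ta := 1 / (α * (1 - γ1)) with hTa
  set Tb := 1 / (β * (γ2 - 1)) with hTb
  have hTa0 : 0 < Ta := by rw [hTa]; positivity
  have hTb0 : 0 < Tb := by rw [hTb]; positivity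
  have τle : ∀ i j, i ≤ j → j ≤ p → τ i ≤ τ j := by
    intro i j hij hjp
    induction j with
    | zero =>
      have : i = 0 := Nat.le_zero.1 hij
      simp [this]
    | succ k ih =>
      rcases Nat.lt_or_ge i (k + 1) with hk | hk
      · have h1 : τ i ≤ τ k := ih (Nat.lt_succ_iff.1 hk) (by omega)
        exact h1.trans (hτmono k (by omega)).le
      · have : i = k + 1 := le_antisymm hij hk
        simp [this]
  have ht0τ : ∀ l, l ≤ p → t0 ≤ τ l := fun l hl => hτ0 ▸ τle 0 l (Nat.zero_le l) hl
  have hineq' : ∀ t, t0 ≤ t → h t < 0 → α * (-h t) ^ γ1 + β * (-h t) ^ γ2 ≤ h' t := by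
    intro t ht hneg
    have H := hineq t ht
    rw [Real.sign_of_neg hneg, abs_of_neg hneg] at H
    linarith
  have hpos' : ∀ t, t0 ≤ t → h t < 0 → 0 < h' t := by
    intro t ht hneg
    have h1 := hineq' t ht hneg
    have h2 : 0 < (-h t) ^ γ1 := Real.rpow_pos_of_pos (by linarith) _
    have h3 : 0 < (-h t) ^ γ2 := Real.rpow_pos_of_pos (by linarith) _
    nlinarith
  have hcontIco : ∀ l < p, ∀ c d, τ l ≤ c → d < τ (l + 1) → ContinuousOn h (Icc c d) := by
    intro l hl c d hc hd t ht
    have hsub : Icc c d ⊆ Ico (τ l) (τ (l + 1)) :=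
      fun x hx => ⟨le_trans hc hx.1, lt_of_le_of_lt hx.2 hd⟩
    exact ((hdiff l hl t (hsub ht)).continuousWithinAt).mono hsub
  have hderivIco : ∀ l < p, ∀ t ∈ Ioo (τ l) (τ (l + 1)), HasDerivAt h (h' t) t := by
    intro l hl t ht
    exact (hdiff l hl t ⟨ht.1.le, ht.2⟩).hasDerivAt (Ico_mem_nhds ht.1 ht.2)
  have hcontIci : ∀ c d, τ p ≤ c → ContinuousOn h (Icc c d) := by
    intro c d hc t ht
    have hsub : Icc c d ⊆ Ici (τ p) := fun x hx => le_trans hc hx.1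
    exact ((hdifflast t (hsub ht)).continuousWithinAt).mono hsub
  have hderivIci : ∀ t, τ p < t → HasDerivAt h (h' t) t := by
    intro t ht
    exact (hdifflast t ht.le).hasDerivAt (Ici_mem_nhds ht)
  have piece : ∀ l < p, ∀ a b, τ l ≤ a → a ≤ b → b < τ (l + 1) → 0 ≤ h a → 0 ≤ h b := by
    intro l hl a b ha hab hb h0
    refine nonneg_core a b h h' hab (hcontIco l hl a b ha hb)
      (fun t ht => hderivIco l hl t ⟨lt_of_le_of_lt ha ht.1, lt_trans ht.2 hb⟩) ?_ h0
    intro t ht htneg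
    exact hpos' t (le_trans (ht0τ l hl.le) (le_trans ha ht.1.le)) htneg
  have pieceJump : ∀ l < p, ∀ a, τ l ≤ a → a < τ (l + 1) → 0 ≤ h a → 0 ≤ h (τ (l + 1)) := by
    intro l hl a ha halt h0
    obtain ⟨L, hLt, hLle⟩ := hjump (l + 1) (Nat.succ_le_succ (Nat.zero_le l)) hl
    have hev : ∀ᶠ s in nhdsWithin (τ (l + 1)) (Iio (τ (l + 1))), 0 ≤ h s := by
      filter_upwards [Ioo_mem_nhdsLT_of_mem
        (⟨halt, le_rfl⟩ : τ (l + 1) ∈ Ioc a (τ (l + 1)))] with s hs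
      exact piece l hl a s ha hs.1.le hs.2 h0
    have : (0 : ℝ) ≤ L := ge_of_tendsto hLt hev
    linarith
  have last : ∀ a, τ p ≤ a → 0 ≤ h a → ∀ t, a ≤ t → 0 ≤ h t := by
    intro a ha h0 t hat
    refine nonneg_core a t h h' hat (hcontIci a t ha)
      (fun s hs => hderivIci s (lt_of_le_of_lt ha hs.1)) ?_ h0
    intro s hs hsneg
    exact hpos' s (le_trans (ht0τ p le_rfl) (le_trans ha hs.1.le)) hsneg
  have step : ∀ m l, p - m ≤ l → l ≤ p → ∀ a, τ l ≤ a → (l < p → a < τ (l + 1)) → 0 ≤ h a →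
      ∀ t, a ≤ t → 0 ≤ h t := by
    intro m
    induction m with
    | zero =>
      intro l hl1 hl2 a ha _ h0 t hat
      have : l = p := by omega
      subst this
      exact last a ha h0 t hat
    | succ k ih =>
      intro l hl1 hl2 a ha hlt h0 t hat
      rcases Nat.lt_or_ge l p with hlp | hlp
      · rcases le_or_gt (p - k) l with hk | hk
        · exact ih l hk hl2 a ha hlt h0 t hat
        · have hlk : p - k ≤ l + 1 := by omega
          rcases lt_or_ge t (τ (l + 1)) with htlt | htge
          · exact piece l hlp a t ha hat htlt h0
          · have h1 : 0 ≤ h (τ (l + 1)) := pieceJump l hlp a ha (hlt hlp) h0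
            exact ih (l + 1) hlk hlp (τ (l + 1)) le_rfl
              (fun hl1p => hτmono (l + 1) hl1p) h1 t htge
      · have : l = p := le_antisymm hl2 hlp
        subst this
        exact last a ha h0 t hat
  have locate : ∀ a, t0 ≤ a → ∃ l, l ≤ p ∧ τ l ≤ a ∧ (l < p → a < τ (l + 1)) := by
    intro a ha
    rcases le_or_gt (τ p) a with hpa | hpa
    · exact ⟨p, le_rfl, hpa, fun hc => absurd hc (lt_irrefl p)⟩
    · have haux : ∀ k, k ≤ p → a < τ k → ∃ l, l < k ∧ τ l ≤ a ∧ a < τ (l + 1) := by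
        intro k
        induction k with
        | zero => intro _ hk; rw [hτ0] at hk; exact absurd hk (not_lt.2 ha)
        | succ j ihj =>
          intro hjp hk
          rcases lt_or_ge a (τ j) with hj | hj
          · obtain ⟨l, hl, h1, h2⟩ := ihj (by omega) hj
            exact ⟨l, by omega, h1, h2⟩
          · exact ⟨j, Nat.lt_succ_self j, hj, hk⟩
      obtain ⟨l, hl, h1, h2⟩ := haux p le_rfl hpa
      exact ⟨l, hl.le, h1, fun _ => h2⟩
  have key : ∀ a, t0 ≤ a → 0 ≤ h a → ∀ t, a ≤ t → 0 ≤ h t := by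
    intro a ha h0 t hat
    obtain ⟨l, hl, h1, h2⟩ := locate a ha
    exact step p l (by omega) hl a h1 h2 h0 t hat
  constructor
  · intro h0 t ht
    exact key t0 le_rfl h0 t ht
  · intro t ht
    have hτ1 : t0 + (Ta + Tb) ≤ τ 1 := by
      have H := hdwell 0 hp0
      rw [hτ0] at H
      linarith
    have reach : ∃ s, t0 ≤ s ∧ s < t0 + (Ta + Tb) ∧ 0 ≤ h s := by
      by_contra hcon
      push_neg at hcon
      have hcont2 : ∀ c d, t0 ≤ c → d < t0 + (Ta + Tb) → ContinuousOn h (Icc c d) := by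
        intro c d hc hd
        exact hcontIco 0 hp0 c d (by rw [hτ0]; exact hc) (lt_of_lt_of_le hd hτ1)
      have hderiv2 : ∀ u ∈ Ioo t0 (t0 + (Ta + Tb)), HasDerivAt h (h' u) u := by
        intro u hu
        exact hderivIco 0 hp0 u ⟨by rw [hτ0]; exact hu.1, lt_of_lt_of_le hu.2 hτ1⟩
      have hbnd : ∀ u ∈ Ioo t0 (t0 + (Ta + Tb)),
          α * (-h u) ^ γ1 + β * (-h u) ^ γ2 ≤ h' u :=
        fun u hu => hineq' u hu.1.le (hcon u hu.1.le hu.2)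
      have hypos : ∀ u, t0 ≤ u → u < t0 + (Ta + Tb) → 0 < -h u :=
        fun u h1 h2 => by linarith [hcon u h1 h2]
      have phaseV : ∀ tm, t0 ≤ tm → tm + Ta < t0 + (Ta + Tb) → -h tm ≤ 1 → False := by
        intro tm htm0 htmT hy1
        have htm1 : tm ≤ tm + Ta := by linarith
        have hVlin := lin_lower tm (tm + Ta) (α * (1 - γ1))
          (fun u => -((-h u) ^ (1 - γ1)))
          (fun u => -(-h' u * (1 - γ1) * (-h u) ^ (1 - γ1 - 1))) htm1
          (ContinuousOn.neg (ContinuousOn.rpow_const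
            (ContinuousOn.neg (hcont2 tm (tm + Ta) htm0 htmT))
            (fun x _ => Or.inr h1γ1.le)))
          (by
            intro u hu
            have hu' : u ∈ Ioo t0 (t0 + (Ta + Tb)) :=
              ⟨lt_of_le_of_lt htm0 hu.1, lt_trans hu.2 htmT⟩
            have hy : 0 < -h u := hypos u hu'.1.le hu'.2
            exact (((hderiv2 u hu').neg).rpow_const (Or.inl (ne_of_gt hy))).neg)
          (by
            intro u hu
            have hu' : u ∈ Ioo t0 (t0 + (Ta + Tb)) :=
              ⟨lt_of_le_of_lt htm0 hu.1, lt_trans hu.2 htmT⟩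
            have hy : 0 < -h u := hypos u hu'.1.le hu'.2
            have hb := hbnd u hu'
            have hw : 0 < (-h u) ^ (1 - γ1 - 1) := Real.rpow_pos_of_pos hy _
            have hprod : (-h u) ^ γ1 * (-h u) ^ (1 - γ1 - 1) = 1 := by
              rw [← Real.rpow_add hy]; norm_num
            have hg2 : 0 < (-h u) ^ γ2 := Real.rpow_pos_of_pos hy _
            have step1 : (α * (-h u) ^ γ1 + β * (-h u) ^ γ2) * ((1 - γ1) * (-h u) ^ (1 - γ1 - 1))
                ≤ h' u * ((1 - γ1) * (-h u) ^ (1 - γ1 - 1)) :=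
              mul_le_mul_of_nonneg_right hb (mul_nonneg h1γ1.le hw.le)
            have expand : (α * (-h u) ^ γ1 + β * (-h u) ^ γ2) * ((1 - γ1) * (-h u) ^ (1 - γ1 - 1))
                = α * (1 - γ1) * ((-h u) ^ γ1 * (-h u) ^ (1 - γ1 - 1))
                  + β * (1 - γ1) * ((-h u) ^ γ2 * (-h u) ^ (1 - γ1 - 1)) := by ring
            rw [expand, hprod] at step1
            have hp2 : 0 ≤ β * (1 - γ1) * ((-h u) ^ γ2 * (-h u) ^ (1 - γ1 - 1)) := by positivity
            show α * (1 - γ1) ≤ -(-h' u * (1 - γ1) * (-h u) ^ (1 - γ1 - 1))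
            nlinarith [step1, hp2])
        have hVtm : (-h tm) ^ (1 - γ1) ≤ 1 :=
          Real.rpow_le_one (by linarith [hypos tm htm0 (by linarith)]) hy1 h1γ1.le
        have hVt1 : 0 < (-h (tm + Ta)) ^ (1 - γ1) :=
          Real.rpow_pos_of_pos (hypos (tm + Ta) (by linarith) (by linarith)) _
        have harith : α * (1 - γ1) * (tm + Ta - tm) = 1 := by
          rw [hTa]; field_simp; ring
        linarith [hVlin, hVtm, hVt1, harith]
      rcases le_or_gt (-h t0) 1 with hc1 | hc1
      · exact phaseV t0 le_rfl (by linarith) hc1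
      · set W0 := (-h t0) ^ (1 - γ2) with hW0
        have hW0pos : 0 < W0 := Real.rpow_pos_of_pos (by linarith) _
        have hW0lt : W0 < 1 := Real.rpow_lt_one_of_one_lt_of_neg hc1 (by linarith)
        set Tb' := (1 - W0) / (β * (γ2 - 1)) with hTb'
        have hd0 : 0 < β * (γ2 - 1) := by positivity
        have hTb'0 : 0 < Tb' := by rw [hTb']; exact div_pos (by linarith) hd0
        have hTb'lt : Tb' < Tb := by
          rw [hTb', hTb, div_lt_div_iff₀ hd0 hd0]
          nlinarith
        have exth : ∃ tm, t0 ≤ tm ∧ tm ≤ t0 + Tb' ∧ -h tm ≤ 1 := by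
          by_contra hcon2
          push_neg at hcon2
          have hWlin := lin_lower t0 (t0 + Tb') (β * (γ2 - 1))
            (fun u => (-h u) ^ (1 - γ2))
            (fun u => -h' u * (1 - γ2) * (-h u) ^ (1 - γ2 - 1)) (by linarith)
            (ContinuousOn.rpow_const
              (ContinuousOn.neg (hcont2 t0 (t0 + Tb') le_rfl (by linarith)))
              (fun x hx => Or.inl (by have := hcon2 x hx.1 hx.2; linarith)))
            (by
              intro u hu
              have hu' : u ∈ Ioo t0 (t0 + (Ta + Tb)) := ⟨hu.1, by
                have := hu.2; linarith⟩
              have hy1' : 1 < -h u := hcon2 u hu.1.le hu.2.le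
              exact ((hderiv2 u hu').neg).rpow_const (Or.inl (by simp only [Pi.neg_apply]; linarith)))
            (by
              intro u hu
              have hu' : u ∈ Ioo t0 (t0 + (Ta + Tb)) := ⟨hu.1, by
                have := hu.2; linarith⟩
              have hy1' : 1 < -h u := hcon2 u hu.1.le hu.2.le
              have hy : 0 < -h u := by linarith
              have hb := hbnd u hu'
              have hw : 0 < (-h u) ^ (1 - γ2 - 1) := Real.rpow_pos_of_pos hy _
              have hprod : (-h u) ^ γ2 * (-h u) ^ (1 - γ2 - 1) = 1 := by
                rw [← Real.rpow_add hy]; norm_num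
              have hg1 : 0 < (-h u) ^ γ1 := Real.rpow_pos_of_pos hy _
              have step1 : (-(α * (-h u) ^ γ1 + β * (-h u) ^ γ2)) * (1 - γ2)
                  ≤ (-h' u) * (1 - γ2) :=
                mul_le_mul_of_nonpos_right (by linarith) (by linarith)
              have step2 := mul_le_mul_of_nonneg_right step1 hw.le
              have expand : (-(α * (-h u) ^ γ1 + β * (-h u) ^ γ2)) * (1 - γ2) * ((-h u) ^ (1 - γ2 - 1))
                  = α * (γ2 - 1) * ((-h u) ^ γ1 * (-h u) ^ (1 - γ2 - 1))
                    + β * (γ2 - 1) * ((-h u) ^ γ2 * (-h u) ^ (1 - γ2 - 1)) := by ring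
              rw [expand, hprod] at step2
              have hp2 : 0 ≤ α * (γ2 - 1) * ((-h u) ^ γ1 * (-h u) ^ (1 - γ2 - 1)) := by positivity
              show β * (γ2 - 1) ≤ -h' u * (1 - γ2) * (-h u) ^ (1 - γ2 - 1)
              nlinarith [step2, hp2])
          have hend : (-h (t0 + Tb')) ^ (1 - γ2) < 1 :=
            Real.rpow_lt_one_of_one_lt_of_neg (hcon2 (t0 + Tb') (by linarith) le_rfl)
              (by linarith)
          have harith : β * (γ2 - 1) * (t0 + Tb' - t0) = 1 - W0 := by
            rw [hTb']; field_simp; ring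
          linarith [hWlin, hend, harith, hW0]
        obtain ⟨tm, htm0, htmb, htm1⟩ := exth
        exact phaseV tm htm0 (by linarith) htm1
    obtain ⟨s, hs0, hsT, hs⟩ := reach
    exact key s hs0 hs t (le_trans hsT.le ht)
end

section
/- Let t0 ∈ ℝ, let h : ℝ → ℝ be differentiable on [t0, ∞), and let λ : ℝ → ℝ be a locally Lipschitz, strictly increasing function with λ(0) = 0 (an extended class K function). Suppose that h'(t) ≥ -λ(h(t)) for all t ≥ t0. If h(t0) ≥ 0, then h(t) ≥ 0 for all t ≥ t0. -/
/-- Comparison lemma with an extended class K function: if `λ` is locally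
Lipschitz, strictly increasing with `λ 0 = 0`, and `h' t ≥ -λ (h t)` on
`[t0, ∞)` with `h t0 ≥ 0`, then `h t ≥ 0` for all `t ≥ t0`. -/
theorem stmt_8 (t0 : ℝ) (h h' : ℝ → ℝ)
    (hdiff : ∀ t, t0 ≤ t → HasDerivAt h (h' t) t)
    (lam : ℝ → ℝ) (hlip : LocallyLipschitz lam) (hmono : StrictMono lam)
    (hlam0 : lam 0 = 0)
    (hineq : ∀ t, t0 ≤ t → h' t ≥ -lam (h t))
    (h0 : 0 ≤ h t0) :
    ∀ t, t0 ≤ t → 0 ≤ h t := by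
  intro t1 ht1
  by_contra hneg
  push_neg at hneg
  -- the set of times in [t0, t1] where h is nonnegative
  set S : Set ℝ := Set.Icc t0 t1 ∩ h ⁻¹' Set.Ici 0 with hS
  have hSne : S.Nonempty := ⟨t0, ⟨le_refl _, ht1⟩, h0⟩
  have hSbdd : BddAbove S := ⟨t1, fun t ht => ht.1.2⟩
  set s := sSup S with hs
  have hcontIcc : ContinuousOn h (Set.Icc t0 t1) := fun x hx =>
    ((hdiff x hx.1).continuousAt).continuousWithinAt
  have hSclosed : IsClosed S :=
    hcontIcc.preimage_isClosed_of_isClosed isClosed_Icc isClosed_Ici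
  have hsS : s ∈ S := hSclosed.csSup_mem hSne hSbdd
  have hs0 : 0 ≤ h s := hsS.2
  have hsIcc : s ∈ Set.Icc t0 t1 := hsS.1
  have hst1 : s < t1 := lt_of_le_of_ne hsIcc.2 (fun he => absurd (he ▸ hs0) (not_le.mpr hneg))
  -- on (s, t1], h is negative
  have hnegOn : ∀ t ∈ Set.Ioc s t1, h t < 0 := by
    intro t ht
    by_contra hcon
    push_neg at hcon
    have : t ∈ S := ⟨⟨le_trans hsIcc.1 ht.1.le, ht.2⟩, hcon⟩
    exact absurd (le_csSup hSbdd this) (not_le.mpr ht.1)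
  -- hence h' > 0 on the interior (s, t1)
  have hderivpos : ∀ t ∈ Set.Ioo s t1, 0 < h' t := by
    intro t ht
    have ht0t : t0 ≤ t := le_trans hsIcc.1 ht.1.le
    have hht : h t < 0 := hnegOn t ⟨ht.1, ht.2.le⟩
    have : lam (h t) < 0 := hlam0 ▸ hmono hht
    linarith [hineq t ht0t]
  -- so h is strictly monotone on [s, t1]
  have hmonoOn : StrictMonoOn h (Set.Icc s t1) := by
    apply strictMonoOn_of_deriv_pos (convex_Icc s t1)
    · exact fun x hx => ((hdiff x (le_trans hsIcc.1 hx.1)).continuousAt).continuousWithinAt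
    · intro x hx
      rw [interior_Icc] at hx
      rw [(hdiff x (le_trans hsIcc.1 hx.1.le)).deriv]
      exact hderivpos x hx
  have : h s < h t1 := hmonoOn ⟨le_refl s, hst1.le⟩ ⟨hst1.le, le_refl t1⟩ hst1
  linarith
end

section
/- Let m ≥ 1, t0 ∈ ℝ, and let ψ_0, ψ_1, …, ψ_{m-1} : [t0, ∞) → ℝ be differentiable functions. Let λ_1, …, λ_{m-1} : ℝ → ℝ be locally Lipschitz, strictly increasing functions with λ_k(0) = 0 (extended class K functions), and suppose that ψ_k(t) = ψ'_{k-1}(t) + λ_k(ψ_{k-1}(t)) for all t ≥ t0 and all k ∈ {1, …, m-1}. Let α_m > 0, β_m > 0, 0 < γ_1m < 1, γ_2m > 1 be constants and suppose that for all t ≥ t0, ψ'_{m-1}(t) + α_m·sgn(ψ_{m-1}(t))·|ψ_{m-1}(t)|^{γ_1m} + β_m·sgn(ψ_{m-1}(t))·|ψ_{m-1}(t)|^{γ_2m} ≥ 0. If ψ_k(t0) ≥ 0 for every k ∈ {0, 1, …, m-1}, then ψ_k(t) ≥ 0 for every k ∈ {0, 1, …, m-1} and every t ≥ t0; in particular ψ_0(t)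 ≥ 0 for all t ≥ t0. -/
lemma aux_nonneg (t0 : ℝ) (f f' : ℝ → ℝ)
    (hd : ∀ t, t0 ≤ t → HasDerivAt f (f' t) t)
    (h0 : 0 ≤ f t0)
    (hpos : ∀ t, t0 ≤ t → f t < 0 → 0 < f' t) :
    ∀ t, t0 ≤ t → 0 ≤ f t := by
  intro t1 ht1
  by_contra hneg
  push_neg at hneg
  have ht01 : t0 < t1 := by
    rcases lt_or_eq_of_le ht1 with h | h
    · exact h
    · exfalso; rw [← h] at hneg; linarith
  have hcont : ContinuousOn f (Set.Icc t0 t1) := fun x hx =>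
    ((hd x hx.1).continuousAt).continuousWithinAt
  set S : Set ℝ := {t | t ∈ Set.Icc t0 t1 ∧ 0 ≤ f t} with hS
  have hSne : S.Nonempty := ⟨t0, ⟨le_refl _, le_of_lt ht01⟩, h0⟩
  have hSbdd : BddAbove S := ⟨t1, fun x hx => hx.1.2⟩
  have hSclosed : IsClosed S := by
    have : S = Set.Icc t0 t1 ∩ f ⁻¹' Set.Ici 0 := by
      ext x; simp [hS, Set.mem_preimage, and_comm]
    rw [this]
    exact hcont.preimage_isClosed_of_isClosed isClosed_Icc isClosed_Ici
  set s := sSup S with hs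
  have hsS : s ∈ S := hSclosed.csSup_mem hSne hSbdd
  have hst0 : t0 ≤ s := hsS.1.1
  have hst1 : s < t1 := by
    rcases lt_or_eq_of_le hsS.1.2 with h | h
    · exact h
    · exfalso
      have h2 := hsS.2
      rw [h] at h2
      linarith
  have hnegOn : ∀ x, s < x → x ≤ t1 → f x < 0 := by
    intro x hsx hxt1
    by_contra hge
    push_neg at hge
    have : x ∈ S := ⟨⟨le_trans hst0 (le_of_lt hsx), hxt1⟩, hge⟩
    exact absurd (le_csSup hSbdd this) (not_le.2 hsx)
  obtain ⟨c, hc, hc'⟩ := exists_hasDerivAt_eq_slope f f' hst1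
    (hcont.mono (Set.Icc_subset_Icc_left hst0))
    (fun x hx => hd x (le_trans hst0 (le_of_lt hx.1)))
  have hfc : f c < 0 := hnegOn c hc.1 (le_of_lt hc.2)
  have : 0 < f' c := hpos c (le_trans hst0 (le_of_lt hc.1)) hfc
  rw [hc'] at this
  have hslope : f t1 - f s < 0 := by
    have := hsS.2
    linarith [hneg]
  have : (f t1 - f s) / (t1 - s) < 0 := div_neg_of_neg_of_pos hslope (by linarith)
  linarith

/-- Forward invariance part of Proposition 1 along a trajectory: with the
recursively defined functions `ψ k = ψ' (k-1) + λ_k ∘ ψ (k-1)` built from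
extended class K functions, and the final fixed-time barrier inequality on
`ψ (m-1)`, nonnegativity of all `ψ k` at `t0` propagates to all `t ≥ t0`. -/
theorem stmt_9 (m : ℕ) (hm : 1 ≤ m) (t0 : ℝ)
    (ψ ψ' : ℕ → ℝ → ℝ)
    (hdiff : ∀ k < m, ∀ t, t0 ≤ t → HasDerivAt (ψ k) (ψ' k t) t)
    (lam : ℕ → ℝ → ℝ)
    (hlip : ∀ k, 1 ≤ k → k < m → LocallyLipschitz (lam k))
    (hmono : ∀ k, 1 ≤ k → k < m → StrictMono (lam k))
    (hlam0 : ∀ k, 1 ≤ k → k < m → lam k 0 = 0)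
    (hrec : ∀ k, 1 ≤ k → k < m → ∀ t, t0 ≤ t →
      ψ k t = ψ' (k - 1) t + lam k (ψ (k - 1) t))
    (α β γ1 γ2 : ℝ) (hα : 0 < α) (hβ : 0 < β)
    (hγ1 : 0 < γ1) (hγ1' : γ1 < 1) (hγ2 : 1 < γ2)
    (hineq : ∀ t, t0 ≤ t →
      ψ' (m - 1) t + α * Real.sign (ψ (m - 1) t) * |ψ (m - 1) t| ^ γ1
        + β * Real.sign (ψ (m - 1) t) * |ψ (m - 1) t| ^ γ2 ≥ 0)
    (h0 : ∀ k < m, 0 ≤ ψ k t0) :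
    ∀ k < m, ∀ t, t0 ≤ t → 0 ≤ ψ k t := by
  have key : ∀ j k, k + j + 1 = m → ∀ t, t0 ≤ t → 0 ≤ ψ k t := by
    intro j
    induction j with
    | zero =>
      intro k hk
      have hkm : k < m := by omega
      have hk1 : k = m - 1 := by omega
      apply aux_nonneg t0 (ψ k) (ψ' k) (hdiff k hkm) (h0 k hkm)
      intro t ht hneg
      have h := hineq t ht
      rw [← hk1] at h
      have hsign : Real.sign (ψ k t) = -1 := Real.sign_of_neg hneg
      have habs : 0 < |ψ k t| := abs_pos.2 (ne_of_lt hneg)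
      have h1 : (0:ℝ) < |ψ k t| ^ γ1 := Real.rpow_pos_of_pos habs γ1
      have h2 : (0:ℝ) < |ψ k t| ^ γ2 := Real.rpow_pos_of_pos habs γ2
      rw [hsign] at h
      nlinarith
    | succ j ih =>
      intro k hk
      have hkm : k < m := by omega
      have hk1m : k + 1 < m := by omega
      have hnext : ∀ t, t0 ≤ t → 0 ≤ ψ (k + 1) t := ih (k + 1) (by omega)
      apply aux_nonneg t0 (ψ k) (ψ' k) (hdiff k hkm) (h0 k hkm)
      intro t ht hneg
      have hr := hrec (k + 1) (by omega) hk1m t ht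
      simp only [Nat.add_sub_cancel] at hr
      have hlt : lam (k + 1) (ψ k t) < 0 := by
        have := hmono (k + 1) (by omega) hk1m hneg
        rwa [hlam0 (k + 1) (by omega) hk1m] at this
      have := hnext t ht
      linarith
  intro k hk t ht
  exact key (m - 1 - k) k (by omega) t ht
end

section
/- Let t0 ∈ ℝ, let h : ℝ → ℝ be twice differentiable on [t0, ∞), let λ1 : ℝ → ℝ be a locally Lipschitz, strictly increasing function with λ1(0) = 0 (an extended class K function), and define ψ1(t) := h'(t) + λ1(h(t)). Let α > 0, β > 0, 0 < γ1 < 1, γ2 > 1 be constants and suppose that for all t ≥ t0, ψ1'(t) ≥ -α·sgn(ψ1(t))·|ψ1(t)|^γ1 - β·sgn(ψ1(t))·|ψ1(t)|^γ2. Then: (i) ψ1(t) ≥ 0 for all t ≥ t0 + T, where T := 1/(α(1-γ1)) + 1/(β(γ2-1)), regardless of the initial values; and (ii) if in addition h(t0) ≥ 0 and ψ1(t0) ≥ 0, then h(t) ≥ 0 and ψ1(t) ≥ 0 for all t ≥ t0. -/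
/-- If `f` is differentiable on `[a,∞)`, `f' > 0` wherever `f < 0`, and `f a ≥ 0`,
then `f ≥ 0` on `[a,∞)`. -/
lemma stay_nonneg (a : ℝ) (f f' : ℝ → ℝ)
    (hd : ∀ t, a ≤ t → HasDerivAt f (f' t) t)
    (hpos : ∀ t, a ≤ t → f t < 0 → 0 < f' t)
    (h0 : 0 ≤ f a) : ∀ t, a ≤ t → 0 ≤ f t := by
  intro t1 hat1
  by_contra hneg
  push_neg at hneg
  have hcontOn : ∀ b c : ℝ, a ≤ b → ContinuousOn f (Set.Icc b c) := by
    intro b c hb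
    intro x hx
    exact ((hd x (hb.trans hx.1)).continuousAt).continuousWithinAt
  set S : Set ℝ := Set.Icc a t1 ∩ f ⁻¹' Set.Ici 0 with hS
  have hSclosed : IsClosed S :=
    (hcontOn a t1 le_rfl).preimage_isClosed_of_isClosed isClosed_Icc isClosed_Ici
  have hSne : S.Nonempty := ⟨a, ⟨le_rfl, hat1⟩, h0⟩
  have hSbdd : BddAbove S := ⟨t1, fun x hx => hx.1.2⟩
  set s := sSup S with hs
  have hsmem : s ∈ S := hSclosed.csSup_mem hSne hSbdd
  have has : a ≤ s := hsmem.1.1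
  have hst1 : s ≤ t1 := hsmem.1.2
  have hfs : 0 ≤ f s := hsmem.2
  have hslt : s < t1 := by
    rcases lt_or_eq_of_le hst1 with h | h
    · exact h
    · rw [h] at hfs; linarith
  have hnegIoc : ∀ u ∈ Set.Ioc s t1, f u < 0 := by
    intro u hu
    by_contra hge
    push_neg at hge
    have : u ∈ S := ⟨⟨has.trans hu.1.le, hu.2⟩, hge⟩
    exact absurd (le_csSup hSbdd this) (not_le.2 hu.1)
  have hmono : StrictMonoOn f (Set.Icc s t1) := by
    apply strictMonoOn_of_deriv_pos (convex_Icc s t1) (hcontOn s t1 has)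
    intro x hx
    rw [interior_Icc] at hx
    have hax : a ≤ x := has.trans hx.1.le
    rw [(hd x hax).deriv]
    exact hpos x hax (hnegIoc x ⟨hx.1, hx.2.le⟩)
  have := hmono (Set.left_mem_Icc.2 hst1) (Set.right_mem_Icc.2 hst1) hslt
  linarith

set_option maxHeartbeats 1000000 in
/-- The Corollary of Section IV along a trajectory: with `ψ1 = h' + λ1 ∘ h`
satisfying the fixed-time barrier differential inequality, (i) `ψ1` becomes
nonnegative after the fixed time `T = 1/(α(1-γ1)) + 1/(β(γ2-1))`, and
(ii) if `h t0 ≥ 0` and `ψ1 t0 ≥ 0`, then both stay nonnegative for all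
`t ≥ t0`. -/
theorem stmt_10 (t0 : ℝ) (h h' h'' : ℝ → ℝ)
    (hdiff : ∀ t, t0 ≤ t → HasDerivAt h (h' t) t)
    (hdiff2 : ∀ t, t0 ≤ t → HasDerivAt h' (h'' t) t)
    (lam1 : ℝ → ℝ) (hlip : LocallyLipschitz lam1) (hmono : StrictMono lam1)
    (hlam0 : lam1 0 = 0)
    (ψ1 : ℝ → ℝ) (hψ1 : ∀ t, ψ1 t = h' t + lam1 (h t))
    (ψ1' : ℝ → ℝ)
    (hψ1diff : ∀ t, t0 ≤ t → HasDerivAt ψ1 (ψ1' t) t)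
    (α β γ1 γ2 : ℝ) (hα : 0 < α) (hβ : 0 < β)
    (hγ1 : 0 < γ1) (hγ1' : γ1 < 1) (hγ2 : 1 < γ2)
    (hineq : ∀ t, t0 ≤ t →
      ψ1' t ≥ -α * Real.sign (ψ1 t) * |ψ1 t| ^ γ1
              - β * Real.sign (ψ1 t) * |ψ1 t| ^ γ2) :
    (∀ t, t0 + (1 / (α * (1 - γ1)) + 1 / (β * (γ2 - 1))) ≤ t → 0 ≤ ψ1 t) ∧
      (0 ≤ h t0 → 0 ≤ ψ1 t0 → ∀ t, t0 ≤ t → 0 ≤ h t ∧ 0 ≤ ψ1 t) := by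
  -- derivative of ψ1 is positive wherever ψ1 < 0
  have hpos : ∀ t, t0 ≤ t → ψ1 t < 0 → 0 < ψ1' t := by
    intro t ht hneg
    have hsgn : Real.sign (ψ1 t) = -1 := Real.sign_of_neg hneg
    have habs : |ψ1 t| = -ψ1 t := abs_of_neg hneg
    have h1 : (0:ℝ) < (-ψ1 t) ^ γ1 := Real.rpow_pos_of_pos (by linarith) _
    have h2 : (0:ℝ) < (-ψ1 t) ^ γ2 := Real.rpow_pos_of_pos (by linarith) _
    have := hineq t ht
    rw [hsgn, habs] at this
    nlinarith
  -- invariance: once nonnegative, stays nonnegative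
  have key : ∀ s, t0 ≤ s → 0 ≤ ψ1 s → ∀ t, s ≤ t → 0 ≤ ψ1 t := by
    intro s hs h0
    exact stay_nonneg s ψ1 ψ1' (fun t ht => hψ1diff t (hs.trans ht))
      (fun t ht => hpos t (hs.trans ht)) h0
  constructor
  · -- part (i): fixed-time convergence
    intro t ht
    by_contra hneg
    push_neg at hneg
    have hallneg : ∀ u, t0 ≤ u → u ≤ t → ψ1 u < 0 := by
      intro u h1 h2
      by_contra hge
      push_neg at hge
      exact absurd (key u h1 hge t h2) (not_le.2 hneg)
    set T1 := 1 / (α * (1 - γ1)) with hT1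
    set T2 := 1 / (β * (γ2 - 1)) with hT2
    have hT1pos : 0 < T1 := by
      apply one_div_pos.2; nlinarith
    have hT2pos : 0 < T2 := by
      apply one_div_pos.2; nlinarith
    set t1 := t0 + T2 with ht1def
    set t2 := t1 + T1 with ht2def
    have ht1le : t1 ≤ t := by rw [ht1def]; linarith
    have ht2le : t2 ≤ t := by rw [ht2def, ht1def]; linarith
    have ht01 : t0 ≤ t1 := by linarith
    have ht12 : t1 ≤ t2 := by linarith
    have hner : ∀ u, t0 ≤ u → u ≤ t → -ψ1 u ≠ 0 :=
      fun u h1 h2 => (neg_pos.2 (hallneg u h1 h2)).ne'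
    have hypos : ∀ u, t0 ≤ u → u ≤ t → 0 < -ψ1 u :=
      fun u h1 h2 => neg_pos.2 (hallneg u h1 h2)
    have hbound : ∀ u, t0 ≤ u → u ≤ t →
        α * (-ψ1 u) ^ γ1 + β * (-ψ1 u) ^ γ2 ≤ ψ1' u := by
      intro u h1 h2
      have hn := hallneg u h1 h2
      have := hineq u h1
      rw [Real.sign_of_neg hn, abs_of_neg hn] at this
      nlinarith
    -- Phase 1 on [t0, t1], function g2
    set g2 : ℝ → ℝ := fun u => (-ψ1 u) ^ (1 - γ2) - β * (γ2 - 1) * u with hg2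
    have hg2d : ∀ u, t0 ≤ u → u ≤ t → HasDerivAt g2
        ((-ψ1' u) * (1 - γ2) * (-ψ1 u) ^ (1 - γ2 - 1) - β * (γ2 - 1)) u := by
      intro u h1 h2
      have hd1 := ((hψ1diff u h1).neg.rpow_const (p := 1 - γ2) (Or.inl (hner u h1 h2)))
      have hd2 : HasDerivAt (fun v : ℝ => β * (γ2 - 1) * v) (β * (γ2 - 1)) u := by
        simpa using (hasDerivAt_id u).const_mul (β * (γ2 - 1))
      exact hd1.sub hd2
    have hg2mono : MonotoneOn g2 (Set.Icc t0 t1) := by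
      apply monotoneOn_of_deriv_nonneg (convex_Icc t0 t1)
      · intro u hu
        exact (hg2d u hu.1 (hu.2.trans ht1le)).continuousAt.continuousWithinAt
      · intro u hu
        rw [interior_Icc] at hu
        exact (hg2d u hu.1.le (hu.2.le.trans ht1le)).differentiableAt.differentiableWithinAt
      · intro u hu
        rw [interior_Icc] at hu
        have h1 : t0 ≤ u := hu.1.le
        have h2 : u ≤ t := hu.2.le.trans ht1le
        rw [(hg2d u h1 h2).deriv]
        have hyu := hypos u h1 h2
        have hbd := hbound u h1 h2
        have hY1 : (0:ℝ) < (-ψ1 u) ^ γ1 := Real.rpow_pos_of_pos hyu _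
        have hY2 : (0:ℝ) < (-ψ1 u) ^ γ2 := Real.rpow_pos_of_pos hyu _
        have hYn : (0:ℝ) < (-ψ1 u) ^ (1 - γ2 - 1) := Real.rpow_pos_of_pos hyu _
        have hprod : (-ψ1 u) ^ γ2 * (-ψ1 u) ^ (1 - γ2 - 1) = 1 := by
          rw [← Real.rpow_add hyu]
          norm_num
        rw [sub_nonneg]
        calc β * (γ2 - 1)
            = (γ2 - 1) * β * ((-ψ1 u) ^ γ2 * (-ψ1 u) ^ (1 - γ2 - 1)) := by
              rw [hprod]; ring
          _ ≤ (γ2 - 1) * (α * (-ψ1 u) ^ γ1 + β * (-ψ1 u) ^ γ2) * ((-ψ1 u) ^ (1 - γ2 - 1)) := by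
              have hc := mul_pos (mul_pos (show (0:ℝ) < γ2 - 1 by linarith) hα)
                (mul_pos hY1 hYn)
              nlinarith [hc]
          _ ≤ (γ2 - 1) * ψ1' u * ((-ψ1 u) ^ (1 - γ2 - 1)) := by
              have := mul_le_mul_of_nonneg_right
                (mul_le_mul_of_nonneg_left hbd (show (0:ℝ) ≤ γ2 - 1 by linarith)) hYn.le
              nlinarith [this]
          _ = -ψ1' u * (1 - γ2) * (-ψ1 u) ^ (1 - γ2 - 1) := by ring
    have hstep1 : g2 t0 ≤ g2 t1 :=
      hg2mono (Set.left_mem_Icc.2 ht01) (Set.right_mem_Icc.2 ht01) ht01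
    have htle : t0 ≤ t := by linarith
    have hT2eq : β * (γ2 - 1) * (t1 - t0) = 1 := by
      have hne : β * (γ2 - 1) ≠ 0 := ne_of_gt (by nlinarith)
      rw [ht1def]
      field_simp [hT2]
      have hx : t0 + T2 - t0 = T2 := by ring
      rw [hx, hT2]; exact mul_one_div_cancel hne
    have hy0 : (0:ℝ) < (-ψ1 t0) ^ (1 - γ2) :=
      Real.rpow_pos_of_pos (hypos t0 le_rfl htle) _
    have h1lt : 1 < (-ψ1 t1) ^ (1 - γ2) := by
      simp only [hg2] at hstep1
      nlinarith [hstep1, hT2eq, hy0]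
    have hyt1lt1 : -ψ1 t1 < 1 := by
      by_contra hge
      push_neg at hge
      have := Real.rpow_le_one_of_one_le_of_nonpos hge
        (show 1 - γ2 ≤ 0 by linarith)
      linarith
    -- Phase 2 on [t1, t2], function g1
    set g1 : ℝ → ℝ := fun u => (-ψ1 u) ^ (1 - γ1) + α * (1 - γ1) * u with hg1
    have hg1d : ∀ u, t0 ≤ u → u ≤ t → HasDerivAt g1
        ((-ψ1' u) * (1 - γ1) * (-ψ1 u) ^ (1 - γ1 - 1) + α * (1 - γ1)) u := by
      intro u h1 h2
      have hd1 := ((hψ1diff u h1).neg.rpow_const (p := 1 - γ1) (Or.inl (hner u h1 h2)))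
      have hd2 : HasDerivAt (fun v : ℝ => α * (1 - γ1) * v) (α * (1 - γ1)) u := by
        simpa using (hasDerivAt_id u).const_mul (α * (1 - γ1))
      exact hd1.add hd2
    have hg1anti : AntitoneOn g1 (Set.Icc t1 t2) := by
      apply antitoneOn_of_deriv_nonpos (convex_Icc t1 t2)
      · intro u hu
        exact (hg1d u (ht01.trans hu.1) (hu.2.trans ht2le)).continuousAt.continuousWithinAt
      · intro u hu
        rw [interior_Icc] at hu
        exact (hg1d u (ht01.trans hu.1.le)
          (hu.2.le.trans ht2le)).differentiableAt.differentiableWithinAt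
      · intro u hu
        rw [interior_Icc] at hu
        have h1 : t0 ≤ u := ht01.trans hu.1.le
        have h2 : u ≤ t := hu.2.le.trans ht2le
        rw [(hg1d u h1 h2).deriv]
        have hyu := hypos u h1 h2
        have hbd := hbound u h1 h2
        have hY1 : (0:ℝ) < (-ψ1 u) ^ γ1 := Real.rpow_pos_of_pos hyu _
        have hY2 : (0:ℝ) < (-ψ1 u) ^ γ2 := Real.rpow_pos_of_pos hyu _
        have hYn : (0:ℝ) < (-ψ1 u) ^ (1 - γ1 - 1) := Real.rpow_pos_of_pos hyu _
        have hprod : (-ψ1 u) ^ γ1 * (-ψ1 u) ^ (1 - γ1 - 1) = 1 := by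
          rw [← Real.rpow_add hyu]
          norm_num
        have hkey : -ψ1' u * (1 - γ1) * (-ψ1 u) ^ (1 - γ1 - 1) ≤ -(α * (1 - γ1)) := by
          calc -ψ1' u * (1 - γ1) * (-ψ1 u) ^ (1 - γ1 - 1)
              ≤ -(α * (-ψ1 u) ^ γ1 + β * (-ψ1 u) ^ γ2) * (1 - γ1) *
                  (-ψ1 u) ^ (1 - γ1 - 1) := by
                have := mul_le_mul_of_nonneg_right (mul_le_mul_of_nonneg_right
                  (neg_le_neg hbd) (show (0:ℝ) ≤ 1 - γ1 by linarith)) hYn.le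
                nlinarith [this]
            _ = -((1 - γ1) * α) * ((-ψ1 u) ^ γ1 * (-ψ1 u) ^ (1 - γ1 - 1))
                - (1 - γ1) * β * ((-ψ1 u) ^ γ2 * (-ψ1 u) ^ (1 - γ1 - 1)) := by ring
            _ ≤ -(α * (1 - γ1)) := by
                rw [hprod]
                have hc := mul_pos (mul_pos (show (0:ℝ) < 1 - γ1 by linarith) hβ)
                  (mul_pos hY2 hYn)
                nlinarith [hc]
        linarith
    have hstep2 : g1 t2 ≤ g1 t1 :=
      hg1anti (Set.left_mem_Icc.2 ht12) (Set.right_mem_Icc.2 ht12) ht12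
    have hT1eq : α * (1 - γ1) * (t2 - t1) = 1 := by
      have hne : α * (1 - γ1) ≠ 0 := ne_of_gt (by nlinarith)
      rw [ht2def]
      field_simp [hT1]
      have hx : t1 + T1 - t1 = T1 := by ring
      rw [hx, hT1]; exact mul_one_div_cancel hne
    have hvt2 : (0:ℝ) < (-ψ1 t2) ^ (1 - γ1) :=
      Real.rpow_pos_of_pos (hypos t2 (by linarith) ht2le) _
    have hvt1 : (-ψ1 t1) ^ (1 - γ1) < 1 :=
      Real.rpow_lt_one (hypos t1 ht01 ht1le).le hyt1lt1 (by linarith)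
    simp only [hg1] at hstep2
    nlinarith [hstep2, hT1eq, hvt2, hvt1]
  · -- part (ii)
    intro hh0 hp0 t ht
    have hψpos : ∀ u, t0 ≤ u → 0 ≤ ψ1 u := key t0 le_rfl hp0
    have hh : ∀ u, t0 ≤ u → 0 ≤ h u := by
      apply stay_nonneg t0 h h' hdiff _ hh0
      intro u hu hneg
      have h1 : lam1 (h u) < 0 := by
        have := hmono hneg
        rwa [hlam0] at this
      have h2 := hψpos u hu
      rw [hψ1 u] at h2
      linarith
    exact ⟨hh t ht, hψpos t ht⟩
end
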